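/- Let α ≤ 1/4, let t ≥ 0, let ψ ∈ C^∞(𝕋) and let Z_N be the second Picard iterate of BBM with renormalized truncated Gaussian data. Write ⟨Z_N(t), ψ⟩ = I₂(f^t_{N,ψ}) as a double Wiener–Itô integral, where f̂^t_{N,ψ}(n₁,n₂) = 1_{|n₁|,|n₂|≤N} C_{α,N}² e^{tφ(n₁+n₂)} φ(n₁+n₂) conj(ψ̂(n₁+n₂)) ⟨n₁⟩^{-α}⟨n₂⟩^{-α} J_{n₁,n₂}(t), with J_{n₁,n₂}(t) = ∫₀^t e^{-t'(φ(n₁+n₂)-φ(n₁)-φ(n₂))} dt'. Then the one-contraction norm tends to zero: lim_{N→∞} ‖f^t_{N,ψ} ⊗₁ f^t_{N,ψ}‖_{L²(𝕋²)} = 0. -/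

import Mathlib

/-!
Write `a(n) = C_{α,N} ⟨n⟩^{-α}` and `w = ⟨·⟩⁻²`. Rapid decay of `ψ̂` gives
`|f̂(n, m)| ≲ |t| a(n) a(m) w(n + m)²`, and Peetre's inequality `w(x) w(y) ≤ 2 w(y - x)` bounds
the contraction at `(n₁, n₂)` by `γ a(n₁) a(n₂) w(n₂ - n₁)`, where
`γ = C_{α,N}² ⟨N⟩^{max(-2α, 0)} ≥ a(m)²` for `|m| ≤ N`. Squaring, using
`2 a(n₁)² a(n₂)² ≤ a(n₁)⁴ + a(n₂)⁴` and the summability of `w`, the squared norm is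
`≲ γ² ∑ a⁴ = γ² / 2`, the last equality being the normalization of `C_{α,N}`.
Finally `γ² → 0`: for `α ≥ 0` because `∑_{|n| ≤ N} ⟨n⟩^{-4α}` dominates the harmonic series
when `4α ≤ 1`, and for `α < 0` because the terms with `N/2 ≤ n ≤ N` already give
`≳ N ⟨N⟩^{-4α}`.
-/

open Filter MeasureTheory intervalIntegral Complex

/-- The BBM Fourier multiplier symbol `φ(n) = -i n / (1 + n²)`. -/
noncomputable def phiSym (n : ℤ) : ℂ := (-Complex.I * (n : ℂ)) / (1 + (n : ℂ) ^ 2)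

/-- The Japanese bracket `⟨n⟩ = √(1 + n²)`. -/
noncomputable def jbr (n : ℤ) : ℝ := Real.sqrt (1 + (n : ℝ) ^ 2)

/-- The renormalization constant `C_{α,N} = (∑_{|n| ≤ N} 2 ⟨n⟩^{-4α})^{-1/4}`. -/
noncomputable def renC (α : ℝ) (N : ℕ) : ℝ :=
  (∑ n ∈ Finset.Icc (-(N : ℤ)) (N : ℤ), 2 / jbr n ^ (4 * α)) ^ (-(1 / 4 : ℝ))

/-- `J_{n₁,n₂}(t) = ∫₀ᵗ e^{-t'(φ(n₁+n₂) - φ(n₁) - φ(n₂))} dt'`. -/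
noncomputable def Jker (n₁ n₂ : ℤ) (t : ℝ) : ℂ :=
  ∫ t' in (0 : ℝ)..t,
    Complex.exp (-(t' : ℂ) * (phiSym (n₁ + n₂) - phiSym n₁ - phiSym n₂))

/-- The kernel `f̂^t_{N,ψ}(n₁,n₂)` of the double Wiener–Itô integral
representing `⟨Z_N(t), ψ⟩`. -/
noncomputable def Fker (α : ℝ) (N : ℕ) (t : ℝ) (ψ : ℤ → ℂ) (n₁ n₂ : ℤ) : ℂ :=
  if |n₁| ≤ (N : ℤ) ∧ |n₂| ≤ (N : ℤ) then
    (renC α N ^ 2 : ℝ) * Complex.exp ((t : ℂ) * phiSym (n₁ + n₂)) * phiSym (n₁ + n₂)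
      * starRingEnd ℂ (ψ (n₁ + n₂)) / ((jbr n₁ ^ α * jbr n₂ ^ α : ℝ))
      * Jker n₁ n₂ t
  else 0

open Finset

lemma one_le_jbr (n : ℤ) : 1 ≤ jbr n :=
  Real.one_le_sqrt.2 (by nlinarith [sq_nonneg (n : ℝ)])

lemma jbr_pos (n : ℤ) : 0 < jbr n := one_pos.trans_le (one_le_jbr n)

lemma jbr_rpow_pos (α : ℝ) (n : ℤ) : 0 < jbr n ^ α := Real.rpow_pos_of_pos (jbr_pos n) α

lemma jbr_sq (n : ℤ) : jbr n ^ 2 = 1 + (n : ℝ) ^ 2 := Real.sq_sqrt (by positivity)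

lemma jbr_le_two_mul_jbr {m n : ℤ} (h : |m| ≤ 2 * |n|) : jbr m ≤ 2 * jbr n := by
  have hmn : (m : ℝ) ^ 2 ≤ (2 * (n : ℝ)) ^ 2 := by
    rw [sq_le_sq, abs_mul, abs_two]; exact_mod_cast h
  refine le_of_pow_le_pow_left₀ two_ne_zero (by linarith [jbr_pos n]) ?_
  rw [mul_pow, jbr_sq, jbr_sq]
  nlinarith

lemma jbr_le_jbr {m n : ℤ} (h : |m| ≤ |n|) : jbr m ≤ jbr n :=
  Real.sqrt_le_sqrt (by
    have : (m : ℝ) ^ 2 ≤ (n : ℝ) ^ 2 := sq_le_sq.2 (by exact_mod_cast h)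
    linarith)

lemma inv_jbr_rpow_sq_le {m n : ℤ} (h : |m| ≤ |n|) (α : ℝ) :
    ((jbr m ^ α) ^ 2)⁻¹ ≤ jbr n ^ max (-(2 * α)) 0 := by
  rw [← Real.rpow_mul_natCast (jbr_pos m).le, ← Real.rpow_neg (jbr_pos m).le]
  calc jbr m ^ (-(α * (2 : ℕ))) ≤ jbr m ^ max (-(2 * α)) 0 :=
        Real.rpow_le_rpow_of_exponent_le (one_le_jbr m)
          (by push_cast; linarith [le_max_left (-(2 * α)) 0])
    _ ≤ jbr n ^ max (-(2 * α)) 0 :=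
        Real.rpow_le_rpow (jbr_pos m).le (jbr_le_jbr h) (le_max_right _ _)

lemma jbr_natCast_le_add_one (k : ℕ) : jbr k ≤ k + 1 :=
  Real.sqrt_le_iff.2 ⟨by positivity, by push_cast; nlinarith [k.cast_nonneg (α := ℝ)]⟩

lemma phiSym_re (n : ℤ) : (phiSym n).re = 0 := by
  simp [phiSym, Complex.div_re, pow_two]

lemma norm_phiSym_le (n : ℤ) : ‖phiSym n‖ ≤ 1 / 2 := by
  have hden : (1 + (n : ℂ) ^ 2) = ((1 + (n : ℝ) ^ 2 : ℝ) : ℂ) := by push_cast; rfl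
  rw [phiSym, hden, norm_div, norm_mul, norm_neg, Complex.norm_I, one_mul, Complex.norm_intCast,
    Complex.norm_of_nonneg (by positivity), div_le_iff₀ (by positivity)]
  nlinarith [sq_nonneg (|(n : ℝ)| - 1), sq_abs (n : ℝ)]

lemma norm_exp_ofReal_mul_phiSym (x : ℝ) (n : ℤ) : ‖Complex.exp (x * phiSym n)‖ = 1 := by
  simp [Complex.norm_exp, phiSym_re]

lemma norm_Jker_le (n₁ n₂ : ℤ) (t : ℝ) : ‖Jker n₁ n₂ t‖ ≤ |t| := by
  have h : ∀ x ∈ Set.uIoc (0 : ℝ) t,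
      ‖Complex.exp (-(x : ℂ) * (phiSym (n₁ + n₂) - phiSym n₁ - phiSym n₂))‖ ≤ 1 := fun x _ => by
    simp [Complex.norm_exp, phiSym_re]
  simpa [Jker] using intervalIntegral.norm_integral_le_of_norm_le_const h

noncomputable def invJbrSq (n : ℤ) : ℝ := (jbr n ^ 2)⁻¹

lemma invJbrSq_eq (n : ℤ) : invJbrSq n = (1 + (n : ℝ) ^ 2)⁻¹ := by rw [invJbrSq, jbr_sq]

lemma invJbrSq_nonneg (n : ℤ) : 0 ≤ invJbrSq n := by rw [invJbrSq_eq]; positivity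

lemma invJbrSq_le_one (n : ℤ) : invJbrSq n ≤ 1 := by
  rw [invJbrSq_eq]; exact inv_le_one_of_one_le₀ (by nlinarith [sq_nonneg (n : ℝ)])

lemma summable_invJbrSq : Summable invJbrSq := by
  refine (Real.summable_one_div_int_pow.2 one_lt_two).of_norm_bounded_eventually ?_
  filter_upwards [(Set.finite_singleton (0 : ℤ)).compl_mem_cofinite] with n (hn : n ≠ 0)
  rw [Real.norm_of_nonneg (invJbrSq_nonneg n), invJbrSq_eq, one_div]
  exact inv_anti₀ (by positivity) (by linarith)

lemma invJbrSq_mul_invJbrSq_le (x y : ℤ) : invJbrSq x * invJbrSq y ≤ 2 * invJbrSq (y - x) := by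
  rw [invJbrSq_eq, invJbrSq_eq, invJbrSq_eq, ← mul_inv, ← div_eq_mul_inv,
    le_div_iff₀ (by positivity), ← div_eq_inv_mul, div_le_iff₀ (by positivity)]
  push_cast
  nlinarith [sq_nonneg ((x : ℝ) + y), sq_nonneg ((x : ℝ) * y)]

lemma invJbrSq_sq_mul_invJbrSq_sq_le (x y : ℤ) :
    invJbrSq x ^ 2 * invJbrSq y ^ 2 ≤ 2 * invJbrSq (y - x) * invJbrSq x := by
  have hx := invJbrSq_nonneg x
  have hy := invJbrSq_nonneg y
  calc invJbrSq x ^ 2 * invJbrSq y ^ 2 = invJbrSq x * (invJbrSq x * invJbrSq y) * invJbrSq y := by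
        ring
    _ ≤ invJbrSq x * (2 * invJbrSq (y - x)) * 1 :=
        mul_le_mul (mul_le_mul_of_nonneg_left (invJbrSq_mul_invJbrSq_le x y) hx)
          (invJbrSq_le_one y) hy (mul_nonneg hx (mul_nonneg zero_le_two (invJbrSq_nonneg _)))
    _ = 2 * invJbrSq (y - x) * invJbrSq x := by ring

lemma sum_comp_le_tsum_of_injective {ι κ : Type*} {f : κ → ℝ} (hf : Summable f)
    (hf₀ : ∀ j, 0 ≤ f j) {e : ι → κ} (he : Function.Injective e) (s : Finset ι) :
    ∑ i ∈ s, f (e i) ≤ ∑' j, f j := by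
  classical
  rw [← sum_image he.injOn]
  exact hf.sum_le_tsum _ (fun j _ => hf₀ j)

lemma sum_invJbrSq_comp_le {e : ℤ → ℤ} (he : Function.Injective e) (s : Finset ℤ) :
    ∑ i ∈ s, invJbrSq (e i) ≤ ∑' n, invJbrSq n :=
  sum_comp_le_tsum_of_injective summable_invJbrSq invJbrSq_nonneg he s

lemma tsum_norm_contraction_sq_eq_sum {ι κ : Type*} {f : ι → κ → ℂ} {s : Finset ι}
    {u : Finset κ} (hf : ∀ n m, f n m ≠ 0 → n ∈ s ∧ m ∈ u) :
    ∑' p : ι × ι, ‖∑' m, f p.1 m * starRingEnd ℂ (f p.2 m)‖ ^ 2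
      = ∑ p ∈ s ×ˢ s, ‖∑ m ∈ u, f p.1 m * starRingEnd ℂ (f p.2 m)‖ ^ 2 := by
  have hinner : ∀ n₁ n₂, ∑' m, f n₁ m * starRingEnd ℂ (f n₂ m)
      = ∑ m ∈ u, f n₁ m * starRingEnd ℂ (f n₂ m) := fun n₁ n₂ =>
    tsum_eq_sum fun m hm => by rw [not_imp_comm.1 (hf n₁ m) (fun h => hm h.2), zero_mul]
  simp_rw [hinner]
  refine tsum_eq_sum fun p hp => ?_
  have hzero : ∀ m, f p.1 m * starRingEnd ℂ (f p.2 m) = 0 := fun m => by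
    by_cases h₁ : p.1 ∈ s
    · have h₂ : p.2 ∉ s := fun h₂ => hp (mem_product.2 ⟨h₁, h₂⟩)
      rw [not_imp_comm.1 (hf p.2 m) (fun h => h₂ h.1), map_zero, mul_zero]
    · rw [not_imp_comm.1 (hf p.1 m) (fun h => h₁ h.1), zero_mul]
  simp [hzero]

lemma sum_sum_sq_mul_invJbrSq_sub_le (s : Finset ℤ) (a : ℤ → ℝ) :
    ∑ n₁ ∈ s, ∑ n₂ ∈ s, (a n₁ * a n₂ * invJbrSq (n₂ - n₁)) ^ 2
      ≤ (∑' n, invJbrSq n) * ∑ n ∈ s, a n ^ 4 := by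
  set Λ := ∑' n, invJbrSq n
  have hpoint : ∀ n₁ n₂, (a n₁ * a n₂ * invJbrSq (n₂ - n₁)) ^ 2
      ≤ (a n₁ ^ 4 * invJbrSq (n₂ - n₁) + a n₂ ^ 4 * invJbrSq (n₂ - n₁)) / 2 := fun n₁ n₂ => by
    have hw₀ := invJbrSq_nonneg (n₂ - n₁)
    have hw : invJbrSq (n₂ - n₁) ^ 2 ≤ invJbrSq (n₂ - n₁) := by
      nlinarith [invJbrSq_le_one (n₂ - n₁)]
    have hamgm : 2 * (a n₁ * a n₂) ^ 2 ≤ a n₁ ^ 4 + a n₂ ^ 4 := by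
      nlinarith [sq_nonneg (a n₁ ^ 2 - a n₂ ^ 2)]
    calc (a n₁ * a n₂ * invJbrSq (n₂ - n₁)) ^ 2
        = (a n₁ * a n₂) ^ 2 * invJbrSq (n₂ - n₁) ^ 2 := by ring
      _ ≤ (a n₁ * a n₂) ^ 2 * invJbrSq (n₂ - n₁) := by gcongr
      _ ≤ (a n₁ ^ 4 + a n₂ ^ 4) / 2 * invJbrSq (n₂ - n₁) := by gcongr; linarith
      _ = _ := by ring
  have hrow : ∀ n₁, ∑ n₂ ∈ s, invJbrSq (n₂ - n₁) ≤ Λ := fun _ =>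
    sum_invJbrSq_comp_le sub_left_injective s
  have hcol : ∀ n₂, ∑ n₁ ∈ s, invJbrSq (n₂ - n₁) ≤ Λ := fun _ =>
    sum_invJbrSq_comp_le sub_right_injective s
  calc ∑ n₁ ∈ s, ∑ n₂ ∈ s, (a n₁ * a n₂ * invJbrSq (n₂ - n₁)) ^ 2
      ≤ ∑ n₁ ∈ s, ∑ n₂ ∈ s,
          (a n₁ ^ 4 * invJbrSq (n₂ - n₁) + a n₂ ^ 4 * invJbrSq (n₂ - n₁)) / 2 := by
        gcongr with n₁ _ n₂ _
        exact hpoint n₁ n₂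
    _ = (∑ n₁ ∈ s, a n₁ ^ 4 * ∑ n₂ ∈ s, invJbrSq (n₂ - n₁)
          + ∑ n₂ ∈ s, a n₂ ^ 4 * ∑ n₁ ∈ s, invJbrSq (n₂ - n₁)) / 2 := by
        simp_rw [← sum_div, sum_add_distrib, mul_sum]
        rw [sum_comm (s := s) (t := s) (f := fun n₁ n₂ => a n₂ ^ 4 * invJbrSq (n₂ - n₁))]
    _ ≤ (∑ n ∈ s, a n ^ 4 * Λ + ∑ n ∈ s, a n ^ 4 * Λ) / 2 := by
        gcongr with n₁ _ n₂ _
        · exact hrow n₁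
        · exact hcol n₂
    _ = Λ * ∑ n ∈ s, a n ^ 4 := by rw [← sum_mul]; ring

section Contraction

variable {s : Finset ℤ} {f : ℤ → ℤ → ℂ} {a : ℤ → ℝ} {c γ : ℝ}

lemma norm_sum_mul_conj_le (hf : ∀ n m, ‖f n m‖ ≤ c * a n * a m * invJbrSq (n + m) ^ 2)
    (ha : ∀ n, 0 ≤ a n) (hγ₀ : 0 ≤ γ) (hγ : ∀ m ∈ s, a m ^ 2 ≤ γ) (n₁ n₂ : ℤ) :
    ‖∑ m ∈ s, f n₁ m * starRingEnd ℂ (f n₂ m)‖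
      ≤ 2 * c ^ 2 * γ * (∑' n, invJbrSq n) * (a n₁ * a n₂ * invJbrSq (n₂ - n₁)) := by
  set K := c ^ 2 * a n₁ * a n₂
  have hK : 0 ≤ K := mul_nonneg (mul_nonneg (sq_nonneg c) (ha n₁)) (ha n₂)
  have hterm : ∀ m ∈ s, ‖f n₁ m * starRingEnd ℂ (f n₂ m)‖
      ≤ 2 * K * γ * invJbrSq (n₂ - n₁) * invJbrSq (n₁ + m) := by
    intro m hm
    have hw := invJbrSq_sq_mul_invJbrSq_sq_le (n₁ + m) (n₂ + m)
    rw [add_sub_add_right_eq_sub] at hw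
    calc ‖f n₁ m * starRingEnd ℂ (f n₂ m)‖ = ‖f n₁ m‖ * ‖f n₂ m‖ := by
          rw [norm_mul, Complex.norm_conj]
      _ ≤ (c * a n₁ * a m * invJbrSq (n₁ + m) ^ 2) * (c * a n₂ * a m * invJbrSq (n₂ + m) ^ 2) :=
          mul_le_mul (hf _ _) (hf _ _) (norm_nonneg _) ((norm_nonneg _).trans (hf _ _))
      _ = K * a m ^ 2 * (invJbrSq (n₁ + m) ^ 2 * invJbrSq (n₂ + m) ^ 2) := by ring
      _ ≤ K * γ * (2 * invJbrSq (n₂ - n₁) * invJbrSq (n₁ + m)) := by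
          gcongr
          exact hγ m hm
      _ = 2 * K * γ * invJbrSq (n₂ - n₁) * invJbrSq (n₁ + m) := by ring
  calc ‖∑ m ∈ s, f n₁ m * starRingEnd ℂ (f n₂ m)‖
      ≤ ∑ m ∈ s, 2 * K * γ * invJbrSq (n₂ - n₁) * invJbrSq (n₁ + m) :=
        (norm_sum_le _ _).trans (sum_le_sum hterm)
    _ = 2 * K * γ * invJbrSq (n₂ - n₁) * ∑ m ∈ s, invJbrSq (n₁ + m) := by rw [mul_sum]
    _ ≤ 2 * K * γ * invJbrSq (n₂ - n₁) * ∑' n, invJbrSq n := by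
        have := invJbrSq_nonneg (n₂ - n₁)
        gcongr
        exact sum_invJbrSq_comp_le (add_right_injective n₁) s
    _ = _ := by ring

theorem tsum_norm_contraction_sq_le (hsupp : ∀ n m, f n m ≠ 0 → n ∈ s ∧ m ∈ s)
    (hf : ∀ n m, ‖f n m‖ ≤ c * a n * a m * invJbrSq (n + m) ^ 2)
    (ha : ∀ n, 0 ≤ a n) (hγ₀ : 0 ≤ γ) (hγ : ∀ m ∈ s, a m ^ 2 ≤ γ) :
    ∑' p : ℤ × ℤ, ‖∑' m, f p.1 m * starRingEnd ℂ (f p.2 m)‖ ^ 2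
      ≤ (2 * c ^ 2 * γ * ∑' n, invJbrSq n) ^ 2 * (∑' n, invJbrSq n) * ∑ n ∈ s, a n ^ 4 := by
  set K := 2 * c ^ 2 * γ * ∑' n, invJbrSq n
  rw [tsum_norm_contraction_sq_eq_sum hsupp, sum_product]
  calc ∑ n₁ ∈ s, ∑ n₂ ∈ s, ‖∑ m ∈ s, f n₁ m * starRingEnd ℂ (f n₂ m)‖ ^ 2
      ≤ ∑ n₁ ∈ s, ∑ n₂ ∈ s, (K * (a n₁ * a n₂ * invJbrSq (n₂ - n₁))) ^ 2 := by
        gcongr with n₁ _ n₂ _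
        exact norm_sum_mul_conj_le hf ha hγ₀ hγ n₁ n₂
    _ = K ^ 2 * ∑ n₁ ∈ s, ∑ n₂ ∈ s, (a n₁ * a n₂ * invJbrSq (n₂ - n₁)) ^ 2 := by
        simp_rw [mul_pow K, mul_sum]
    _ ≤ K ^ 2 * ((∑' n, invJbrSq n) * ∑ n ∈ s, a n ^ 4) := by
        gcongr
        exact sum_sum_sq_mul_invJbrSq_sub_le s a
    _ = _ := by ring

end Contraction

noncomputable def renSum (α : ℝ) (N : ℕ) : ℝ := ∑ n ∈ Icc (-(N : ℤ)) N, 2 / jbr n ^ (4 * α)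

lemma renSum_pos (α : ℝ) (N : ℕ) : 0 < renSum α N :=
  sum_pos (fun n _ => div_pos two_pos (jbr_rpow_pos _ n)) ⟨0, by simp⟩

lemma renC_nonneg (α : ℝ) (N : ℕ) : 0 ≤ renC α N := Real.rpow_nonneg (renSum_pos α N).le _

lemma renC_pow_four (α : ℝ) (N : ℕ) : renC α N ^ 4 = (renSum α N)⁻¹ := by
  change (renSum α N ^ (-(1 / 4 : ℝ))) ^ (4 : ℕ) = _
  rw [← Real.rpow_mul_natCast (renSum_pos α N).le]
  norm_num [Real.rpow_neg_one]

lemma renC_div_jbr_rpow_nonneg (α : ℝ) (N : ℕ) (n : ℤ) : 0 ≤ renC α N / jbr n ^ α :=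
  div_nonneg (renC_nonneg α N) (jbr_rpow_pos α n).le

lemma renC_div_jbr_rpow_sq_le {α : ℝ} {N : ℕ} {m : ℤ} (hm : m ∈ Icc (-(N : ℤ)) N) :
    (renC α N / jbr m ^ α) ^ 2 ≤ renC α N ^ 2 * jbr N ^ max (-(2 * α)) 0 := by
  have hmN : |m| ≤ |(N : ℤ)| := by rw [mem_Icc] at hm; rw [Nat.abs_cast]; exact abs_le.2 hm
  rw [div_pow, div_eq_mul_inv]
  exact mul_le_mul_of_nonneg_left (inv_jbr_rpow_sq_le hmN α) (sq_nonneg _)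

lemma sum_renC_div_jbr_rpow_pow_four (α : ℝ) (N : ℕ) :
    ∑ n ∈ Icc (-(N : ℤ)) N, (renC α N / jbr n ^ α) ^ 4 = 1 / 2 := by
  have hsum : ∑ n ∈ Icc (-(N : ℤ)) N, (renC α N / jbr n ^ α) ^ 4
      = renC α N ^ 4 * (renSum α N / 2) := by
    rw [renSum, sum_div, mul_sum]
    refine sum_congr rfl fun n _ => ?_
    rw [div_pow, ← Real.rpow_mul_natCast (jbr_pos n).le]
    push_cast
    ring_nf
  rw [hsum, renC_pow_four]
  field_simp [(renSum_pos α N).ne']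

lemma norm_Fker_le (α : ℝ) (N : ℕ) (t : ℝ) (ψ : ℤ → ℂ) (n m : ℤ) :
    ‖Fker α N t ψ n m‖
      ≤ |t| / 2 * (renC α N / jbr n ^ α) * (renC α N / jbr m ^ α) * ‖ψ (n + m)‖ := by
  have hn := jbr_rpow_pos α n
  have hm := jbr_rpow_pos α m
  rw [Fker]
  split_ifs
  · calc _ = renC α N ^ 2 / (jbr n ^ α * jbr m ^ α) * ‖ψ (n + m)‖
            * (‖phiSym (n + m)‖ * ‖Jker n m t‖) := by
          rw [norm_mul, norm_div, norm_mul, norm_mul, norm_mul, Complex.norm_real,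
            Complex.norm_real, Complex.norm_conj, norm_exp_ofReal_mul_phiSym,
            Real.norm_of_nonneg (sq_nonneg _), Real.norm_of_nonneg (mul_pos hn hm).le]
          ring
      _ ≤ renC α N ^ 2 / (jbr n ^ α * jbr m ^ α) * ‖ψ (n + m)‖ * (1 / 2 * |t|) := by
          gcongr
          · exact norm_phiSym_le _
          · exact norm_Jker_le n m t
      _ = _ := by ring
  · rw [norm_zero]
    exact mul_nonneg (mul_nonneg (mul_nonneg (by positivity) (renC_div_jbr_rpow_nonneg α N n))
      (renC_div_jbr_rpow_nonneg α N m)) (norm_nonneg _)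

lemma mem_Icc_of_Fker_ne_zero {α : ℝ} {N : ℕ} {t : ℝ} {ψ : ℤ → ℂ} (n m : ℤ)
    (h : Fker α N t ψ n m ≠ 0) : n ∈ Icc (-(N : ℤ)) N ∧ m ∈ Icc (-(N : ℤ)) N := by
  by_contra hnm
  refine h (if_neg ?_)
  simpa only [mem_Icc, abs_le] using hnm

lemma sum_range_le_sum_Icc {f : ℤ → ℝ} (hf : ∀ n, 0 ≤ f n) (N : ℕ) :
    ∑ k ∈ range (N + 1), f k ≤ ∑ n ∈ Icc (-(N : ℤ)) N, f n := by
  refine (sum_map (range (N + 1)) Nat.castEmbedding f).symm.trans_le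
    (sum_le_sum_of_subset_of_nonneg (fun n hn => ?_) (fun n _ _ => hf n))
  simp only [Finset.mem_map, mem_range, Nat.castEmbedding_apply] at hn
  obtain ⟨k, hk, rfl⟩ := hn
  rw [mem_Icc]
  omega

lemma tendsto_renSum_atTop {α : ℝ} (hα : α ≤ 1 / 4) : Tendsto (renSum α) atTop atTop := by
  refine tendsto_atTop_mono (fun N => ?_)
    (Real.tendsto_sum_range_one_div_nat_succ_atTop.comp (tendsto_add_atTop_nat 1))
  refine le_trans (sum_le_sum fun k _ => ?_)
    (sum_range_le_sum_Icc (fun n => (div_pos two_pos (jbr_rpow_pos _ n)).le) N)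
  have hk : jbr k ^ (4 * α) ≤ k + 1 :=
    (Real.rpow_le_rpow_of_exponent_le (one_le_jbr k) (by linarith : 4 * α ≤ 1)).trans
      ((Real.rpow_one _).trans_le (jbr_natCast_le_add_one k))
  calc 1 / ((k : ℝ) + 1) ≤ 1 / jbr k ^ (4 * α) := one_div_le_one_div_of_le (jbr_rpow_pos _ _) hk
    _ ≤ 2 / jbr k ^ (4 * α) := div_le_div_of_nonneg_right one_le_two (jbr_rpow_pos _ _).le

lemma natCast_mul_jbr_rpow_le_renSum {α : ℝ} (hα : α ≤ 0) (N : ℕ) :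
    N * jbr N ^ (-(4 * α)) ≤ 2 ^ (-(4 * α)) * renSum α N := by
  set e := -(4 * α)
  set J := Ico ((N + 1) / 2) (N + 1)
  have hterm : ∀ k ∈ J, 2 * jbr N ^ e ≤ 2 ^ e * (2 / jbr k ^ (4 * α)) := by
    intro k hk
    rw [mem_Ico] at hk
    have hNk : jbr N ≤ 2 * jbr k :=
      jbr_le_two_mul_jbr (by rw [Nat.abs_cast, Nat.abs_cast]; omega)
    calc 2 * jbr N ^ e ≤ 2 * (2 * jbr k) ^ e := by
          gcongr
          · exact (jbr_pos _).le
          · linarith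
      _ = 2 ^ e * (2 / jbr k ^ (4 * α)) := by
          rw [Real.mul_rpow zero_le_two (jbr_pos _).le, Real.rpow_neg (jbr_pos _).le]
          ring
  have hcard : (N : ℝ) ≤ 2 * #J := by
    rw [Nat.card_Ico]; exact_mod_cast (by omega : N ≤ 2 * (N + 1 - (N + 1) / 2))
  have hJ : J ⊆ range (N + 1) := by
    rw [range_eq_Ico]; exact Ico_subset_Ico (Nat.zero_le _) le_rfl
  calc (N : ℝ) * jbr N ^ e ≤ #J * (2 * jbr N ^ e) := by
        nlinarith [(jbr_rpow_pos e N).le]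
    _ ≤ ∑ k ∈ J, 2 ^ e * (2 / jbr k ^ (4 * α)) := by
        rw [← nsmul_eq_mul]; exact card_nsmul_le_sum _ _ _ hterm
    _ ≤ ∑ k ∈ range (N + 1), 2 ^ e * (2 / jbr k ^ (4 * α)) :=
        sum_le_sum_of_subset_of_nonneg hJ fun k _ _ =>
          mul_nonneg (Real.rpow_nonneg zero_le_two _) (div_pos two_pos (jbr_rpow_pos _ _)).le
    _ ≤ 2 ^ e * renSum α N := by
        rw [← mul_sum]
        exact mul_le_mul_of_nonneg_left
          (sum_range_le_sum_Icc (fun n => (div_pos two_pos (jbr_rpow_pos _ n)).le) N)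
          (Real.rpow_nonneg zero_le_two _)

lemma tendsto_renC_pow_four_mul_jbr_rpow_sq {α : ℝ} (hα : α ≤ 1 / 4) :
    Tendsto (fun N : ℕ => renC α N ^ 4 * (jbr N ^ max (-(2 * α)) 0) ^ 2) atTop (nhds 0) := by
  simp_rw [renC_pow_four]
  rcases le_total 0 α with hα₀ | hα₀
  · simp only [max_eq_right (by linarith : -(2 * α) ≤ 0), Real.rpow_zero, one_pow, mul_one]
    exact (tendsto_renSum_atTop hα).inv_tendsto_atTop
  · refine squeeze_zero' (Eventually.of_forall fun N =>
        mul_nonneg (inv_nonneg.2 (renSum_pos α N).le) (sq_nonneg _))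
      ?_ (tendsto_const_div_atTop_nhds_zero_nat (2 ^ (-(4 * α))))
    filter_upwards [eventually_ge_atTop 1] with N hN
    have hG : (jbr N ^ max (-(2 * α)) 0) ^ 2 = jbr N ^ (-(4 * α)) := by
      rw [max_eq_left (by linarith), ← Real.rpow_mul_natCast (jbr_pos _).le]
      ring_nf
    rw [hG, inv_mul_le_iff₀ (renSum_pos α N), mul_div_assoc', le_div_iff₀ (by exact_mod_cast hN)]
    linarith [natCast_mul_jbr_rpow_le_renSum hα₀ N]

lemma norm_Fker_le_of_decay {α : ℝ} {N : ℕ} {t C : ℝ} {ψ : ℤ → ℂ}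
    (hC : ∀ j, ‖ψ j‖ ≤ C * invJbrSq j ^ 2) (n m : ℤ) :
    ‖Fker α N t ψ n m‖
      ≤ |t| / 2 * C * (renC α N / jbr n ^ α) * (renC α N / jbr m ^ α) * invJbrSq (n + m) ^ 2 := by
  have hcoef : 0 ≤ |t| / 2 * (renC α N / jbr n ^ α) * (renC α N / jbr m ^ α) :=
    mul_nonneg (mul_nonneg (by positivity) (renC_div_jbr_rpow_nonneg α N n))
      (renC_div_jbr_rpow_nonneg α N m)
  calc ‖Fker α N t ψ n m‖
      ≤ |t| / 2 * (renC α N / jbr n ^ α) * (renC α N / jbr m ^ α) * ‖ψ (n + m)‖ :=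
        norm_Fker_le α N t ψ n m
    _ ≤ |t| / 2 * (renC α N / jbr n ^ α) * (renC α N / jbr m ^ α) * (C * invJbrSq (n + m) ^ 2) :=
        mul_le_mul_of_nonneg_left (hC _) hcoef
    _ = _ := by ring

theorem contraction_norm_tendsto_zero_general (α t : ℝ) (hα : α ≤ 1 / 4)
    (ψ : ℤ → ℂ) (hψ : ∀ k : ℕ, ∃ C : ℝ, ∀ n : ℤ, ‖ψ n‖ ≤ C * jbr n ^ (-(k : ℝ))) :
    Tendsto (fun N : ℕ =>
      Real.sqrt (∑' p : ℤ × ℤ,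
        ‖∑' m : ℤ, Fker α N t ψ p.1 m * starRingEnd ℂ (Fker α N t ψ p.2 m)‖ ^ 2))
      atTop (nhds 0) := by
  obtain ⟨C, hC⟩ := hψ 4
  have hψ4 : ∀ j, ‖ψ j‖ ≤ C * invJbrSq j ^ 2 := fun j => by
    rw [invJbrSq, inv_pow, ← pow_mul, ← Real.rpow_natCast, ← Real.rpow_neg (jbr_pos j).le]
    exact_mod_cast hC j
  set c := |t| / 2 * C
  set Λ := ∑' n, invJbrSq n
  have hbound : ∀ N : ℕ,
      ∑' p : ℤ × ℤ, ‖∑' m : ℤ, Fker α N t ψ p.1 m * starRingEnd ℂ (Fker α N t ψ p.2 m)‖ ^ 2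
        ≤ 2 * c ^ 4 * Λ ^ 3 * (renC α N ^ 4 * (jbr N ^ max (-(2 * α)) 0) ^ 2) := fun N => by
    refine (tsum_norm_contraction_sq_le mem_Icc_of_Fker_ne_zero (norm_Fker_le_of_decay hψ4)
      (renC_div_jbr_rpow_nonneg α N) (mul_nonneg (sq_nonneg _) (jbr_rpow_pos _ _).le)
      (fun m hm => renC_div_jbr_rpow_sq_le hm)).trans_eq ?_
    rw [sum_renC_div_jbr_rpow_pow_four]
    ring
  refine squeeze_zero (fun N => Real.sqrt_nonneg _) (fun N => Real.sqrt_le_sqrt (hbound N)) ?_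
  simpa using ((tendsto_renC_pow_four_mul_jbr_rpow_sq hα).const_mul (2 * c ^ 4 * Λ ^ 3)).sqrt

/-- The one-contraction `L²(𝕋²)` norm of the kernel `f^t_{N,ψ}` tends to zero:
for `α ≤ 1/4`, `t ≥ 0` and rapidly decreasing `ψ̂`,
`‖f^t_{N,ψ} ⊗₁ f^t_{N,ψ}‖_{L²(𝕋²)} → 0` as `N → ∞`. -/
theorem contraction_norm_tendsto_zero (α t : ℝ) (hα : α ≤ 1 / 4) (ht : 0 ≤ t)
    (ψ : ℤ → ℂ) (hψ : ∀ k : ℕ, ∃ C : ℝ, ∀ n : ℤ, ‖ψ n‖ ≤ C * jbr n ^ (-(k : ℝ))) :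
    Tendsto (fun N : ℕ =>
      Real.sqrt (∑' p : ℤ × ℤ,
        ‖∑' m : ℤ, Fker α N t ψ p.1 m * starRingEnd ℂ (Fker α N t ψ p.2 m)‖ ^ 2))
      atTop (nhds 0) :=
  contraction_norm_tendsto_zero_general α t hα ψ hψ
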